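/- Let C_V assign to each (q, v) ∈ ℝᵐ × ℝᵐ a linear subspace C_V(q, v) ⊆ ℝᵐ, and let L : ℝᵐ × ℝᵐ → ℝ be twice continuously differentiable. Suppose q : ℝ → ℝᵐ is a C² curve such that for every t: (i) q̇(t) ∈ C_V(q(t), q̇(t)), and (ii) ⟨(d/dt)(∂L/∂v)(q(t), q̇(t)) − (∂L/∂q)(q(t), q̇(t)), w⟩ = 0 for all w ∈ C_V(q(t), q̇(t)). Then the energy t ↦ E(q(t), q̇(t)) := ⟨(∂L/∂v)(q(t), q̇(t)), q̇(t)⟩ − L(q(t), q̇(t)) is constant, for any choice of the variational constraint C_V. -/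

import Mathlib

open scoped RealInnerProductSpace

noncomputable section

/-- `ℝᵐ` with the Euclidean inner product. -/
abbrev E (m : ℕ) : Type := EuclideanSpace ℝ (Fin m)

/-- Gradient of `L` in its first argument `q`. -/
noncomputable def gQ {m : ℕ} (L : E m → E m → ℝ) (q v : E m) : E m :=
  gradient (fun x => L x v) q

/-- Gradient of `L` in its second argument `v`. -/
noncomputable def gV {m : ℕ} (L : E m → E m → ℝ) (q v : E m) : E m :=
  gradient (fun y => L q y) v

/-! Differentiating the energy `⟪∂L/∂v, q̇⟫ - L` along the curve, the two terms `⟪∂L/∂v, q̈⟫`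
cancel and what remains is `⟪d/dt (∂L/∂v) - ∂L/∂q, q̇⟫`. This vanishes by the
Lagrange–d'Alembert equation tested against `w = q̇`, which is admissible precisely because the
constraint is of thermodynamic type, `q̇ ∈ C_V(q, q̇)`. So the energy has zero derivative. -/

open InnerProductSpace ContinuousLinearMap

section PartialGradient

variable {F G : Type*} [NormedAddCommGroup F] [InnerProductSpace ℝ F]
  [NormedAddCommGroup G] [InnerProductSpace ℝ G]
  {f : F × G → ℝ} {x : F} {y : G}

theorem gradient_comp_prodMk_left [CompleteSpace F] (hf : DifferentiableAt ℝ f (x, y)) :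
    gradient (fun x' => f (x', y)) x =
      (toDual ℝ F).symm ((fderiv ℝ f (x, y)).comp (inl ℝ F G)) := by
  have hcomp : HasFDerivAt (fun x' => f (x', y)) ((fderiv ℝ f (x, y)).comp (inl ℝ F G)) x :=
    hf.hasFDerivAt.comp x (hasFDerivAt_prodMk_left x y)
  rw [gradient, hcomp.fderiv]

theorem gradient_comp_prodMk_right [CompleteSpace G] (hf : DifferentiableAt ℝ f (x, y)) :
    gradient (fun y' => f (x, y')) y =
      (toDual ℝ G).symm ((fderiv ℝ f (x, y)).comp (inr ℝ F G)) := by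
  have hcomp : HasFDerivAt (fun y' => f (x, y')) ((fderiv ℝ f (x, y)).comp (inr ℝ F G)) y :=
    hf.hasFDerivAt.comp y (hasFDerivAt_prodMk_right x y)
  rw [gradient, hcomp.fderiv]

theorem fderiv_apply_eq_inner_gradient_add_inner_gradient [CompleteSpace F] [CompleteSpace G]
    (hf : DifferentiableAt ℝ f (x, y)) (u : F) (w : G) :
    fderiv ℝ f (x, y) (u, w) =
      ⟪gradient (fun x' => f (x', y)) x, u⟫ + ⟪gradient (fun y' => f (x, y')) y, w⟫ := by
  rw [gradient_comp_prodMk_left hf, gradient_comp_prodMk_right hf, toDual_symm_apply,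
    toDual_symm_apply, comp_apply, comp_apply, inl_apply, inr_apply, ← map_add, Prod.mk_add_mk,
    add_zero, zero_add]

end PartialGradient

variable {m : ℕ}

def energy (L : E m → E m → ℝ) (q v : E m) : ℝ := ⟪gV L q v, v⟫ - L q v

theorem contDiff_gV_comp {n : ℕ} {L : E m → E m → ℝ}
    (hL : ContDiff ℝ (n + 1) (Function.uncurry L)) {x v : ℝ → E m}
    (hx : ContDiff ℝ n x) (hv : ContDiff ℝ n v) :
    ContDiff ℝ n (fun t => gV L (x t) (v t)) := by
  have hdiff : Differentiable ℝ (Function.uncurry L) := hL.differentiable (by simp)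
  have hgV : (fun t => gV L (x t) (v t)) = fun t => (toDual ℝ (E m)).symm
      ((fderiv ℝ (Function.uncurry L) (x t, v t)).comp (inr ℝ (E m) (E m))) :=
    funext fun t => gradient_comp_prodMk_right (hdiff (x t, v t))
  rw [hgV]
  exact (toDual ℝ (E m)).symm.contDiff.comp
    (((hL.fderiv_right le_rfl).comp (hx.prodMk hv)).clm_comp contDiff_const)

theorem hasDerivAt_energy_comp {L : E m → E m → ℝ} {x v : ℝ → E m} {x' v' p' : E m} {t : ℝ}
    (hL : DifferentiableAt ℝ (Function.uncurry L) (x t, v t))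
    (hx : HasDerivAt x x' t) (hv : HasDerivAt v v' t)
    (hp : HasDerivAt (fun s => gV L (x s) (v s)) p' t) :
    HasDerivAt (fun s => energy L (x s) (v s)) (⟪p', v t⟫ - ⟪gQ L (x t) (v t), x'⟫) t := by
  have hLcomp : HasDerivAt (fun s => L (x s) (v s))
      (fderiv ℝ (Function.uncurry L) (x t, v t) (x', v')) t :=
    hL.hasFDerivAt.comp_hasDerivAt (f := fun s => (x s, v s)) t (hx.prodMk hv)
  refine ((hp.inner ℝ hv).sub hLcomp).congr_deriv ?_
  rw [fderiv_apply_eq_inner_gradient_add_inner_gradient hL]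
  simp only [gV, gQ, Function.uncurry_apply_pair]
  ring

theorem statement1 {m : ℕ} (CV : E m → E m → Submodule ℝ (E m))
    (L : E m → E m → ℝ) (hL : ContDiff ℝ 2 (Function.uncurry L))
    (q : ℝ → E m) (hq : ContDiff ℝ 2 q)
    (h1 : ∀ t : ℝ, deriv q t ∈ CV (q t) (deriv q t))
    (h2 : ∀ t : ℝ, ∀ w ∈ CV (q t) (deriv q t),
      ⟪deriv (fun s => gV L (q s) (deriv q s)) t - gQ L (q t) (deriv q t), w⟫ = 0) :
    ∀ t₁ t₂ : ℝ,
      ⟪gV L (q t₁) (deriv q t₁), deriv q t₁⟫ - L (q t₁) (deriv q t₁) =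
      ⟪gV L (q t₂) (deriv q t₂), deriv q t₂⟫ - L (q t₂) (deriv q t₂) := by
  obtain ⟨hq_diff, -, hq'⟩ := contDiff_succ_iff_deriv.mp (show ContDiff ℝ (1 + 1) q from hq)
  have hp : ContDiff ℝ 1 (fun t => gV L (q t) (deriv q t)) :=
    contDiff_gV_comp hL (hq.of_le one_le_two) hq'
  have henergy (t : ℝ) : HasDerivAt (fun s => energy L (q s) (deriv q s)) 0 t := by
    convert hasDerivAt_energy_comp (hL.differentiable two_ne_zero _) (hq_diff t).hasDerivAt
      ((hq'.differentiable one_ne_zero) t).hasDerivAt ((hp.differentiable one_ne_zero) t).hasDerivAt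
    rw [← inner_sub_left, h2 t _ (h1 t)]
  exact is_const_of_deriv_eq_zero (fun t => (henergy t).differentiableAt) fun t => (henergy t).deriv
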